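/- arXiv:1808.01806 — 2 statements merged into one kernel-verified Lean document; each statement's English description precedes it below -/
import Mathlib

section
/- Under the abstract variational framework, let γ₁, γ₂ : X → ℝ be bounded measurable with 0 ≤ γ₁ ≤ γ₂ μ-a.e., let ℓ : V → ℝ be a linear functional, and let u₁, u₂ ∈ V be weak solutions for (γ₁, ℓ) and (γ₂, ℓ) respectively. Then ℓ(u₂) ≤ ℓ(u₁). (This is Corollary 4.2, the monotonicity of the Neumann-to-Dirichlet map: γ₁ ≤ γ₂ implies Λ(γ₁) ≥ Λ(γ₂) in the sense of quadratic forms.) -/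
/-!
With `γ₁ ≥ 0`, the form `B v w = a v w + ∫ γ₁ (T v) (T w) dμ` is symmetric positive semidefinite.
The solution `u₁` satisfies `B u₁ = ℓ`, and `γ₁ ≤ γ₂` makes `u₂` a subsolution:
`B u₂ u₂ ≤ a u₂ u₂ + ∫ γ₂ (T u₂)² dμ = ℓ u₂`. Expanding by symmetry,
`0 ≤ B (u₁ - u₂) (u₁ - u₂) = ℓ u₁ - 2 ℓ u₂ + B u₂ u₂ ≤ ℓ u₁ - ℓ u₂`.
-/

open MeasureTheory

theorem LinearMap.BilinForm.IsPosSemidef.apply_le_of_eq {R V : Type*} [CommRing R] [LinearOrder R]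
    [IsStrictOrderedRing R] [AddCommGroup V] [Module R V]
    {B : LinearMap.BilinForm R V} (hB : B.IsPosSemidef) {ℓ : V →ₗ[R] R} {u₁ u₂ : V}
    (h₁ : B u₁ = ℓ) (h₂ : B u₂ u₂ ≤ ℓ u₂) :
    ℓ u₂ ≤ ℓ u₁ := by
  have h₂₁ : B u₂ u₁ = ℓ u₂ := by rw [← h₁]; exact hB.isSymm.eq u₂ u₁
  have hsq : B (u₁ - u₂) (u₁ - u₂) = ℓ u₁ - 2 * ℓ u₂ + B u₂ u₂ := by
    simp only [map_sub, LinearMap.sub_apply, h₁, h₂₁]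
    ring
  linarith [hB.isNonneg.nonneg (u₁ - u₂)]

section SymmBilinForm

variable {R V : Type*} [CommSemiring R] [AddCommMonoid V] [Module R V]

def symmBilinForm (a : V → V → R) (ha_symm : ∀ v w, a v w = a w v)
    (ha_add : ∀ u v w, a (u + v) w = a u w + a v w)
    (ha_smul : ∀ (c : R) (v w : V), a (c • v) w = c * a v w) : LinearMap.BilinForm R V :=
  LinearMap.mk₂ R a ha_add ha_smul
    (fun u v w => by rw [ha_symm, ha_add, ha_symm v, ha_symm w])
    (fun c v w => by rw [ha_symm, ha_smul, ha_symm w, smul_eq_mul])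

theorem isPosSemidef_symmBilinForm [LE R] (a : V → V → R) (ha_symm ha_add ha_smul)
    (ha_nonneg : ∀ v, 0 ≤ a v v) : (symmBilinForm a ha_symm ha_add ha_smul).IsPosSemidef where
  isSymm := ⟨ha_symm⟩
  isNonneg := ⟨ha_nonneg⟩

end SymmBilinForm

section WeightedTraceForm

variable {V X : Type*} [AddCommGroup V] [Module ℝ V] [MeasurableSpace X] {μ : Measure X}

theorem integrable_mul_mul_of_memLp_top {γ f g : X → ℝ} (hγ : MemLp γ ⊤ μ) (hf : MemLp f 2 μ)
    (hg : MemLp g 2 μ) : Integrable (fun x => γ x * f x * g x) μ := by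
  have h := hγ.integrable_mul (memLp_one_iff_integrable.2 (hf.integrable_mul hg))
  exact h.congr (ae_of_all _ fun x => (mul_assoc (γ x) (f x) (g x)).symm)

noncomputable def weightedTraceForm (μ : Measure X) (T : V →ₗ[ℝ] X → ℝ) (hT : ∀ v, MemLp (T v) 2 μ)
    {γ : X → ℝ} (hγ : MemLp γ ⊤ μ) : LinearMap.BilinForm ℝ V :=
  LinearMap.mk₂ ℝ (fun v w => ∫ x, γ x * T v x * T w x ∂μ)
    (fun u v w => by
      simp only [map_add, Pi.add_apply, mul_add, add_mul]
      exact integral_add (integrable_mul_mul_of_memLp_top hγ (hT u) (hT w))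
        (integrable_mul_mul_of_memLp_top hγ (hT v) (hT w)))
    (fun c v w => by
      simp only [map_smul, Pi.smul_apply, smul_eq_mul, ← integral_const_mul]
      congr 1 with x
      ring)
    (fun u v w => by
      simp only [map_add, Pi.add_apply, mul_add]
      exact integral_add (integrable_mul_mul_of_memLp_top hγ (hT u) (hT v))
        (integrable_mul_mul_of_memLp_top hγ (hT u) (hT w)))
    (fun c v w => by
      simp only [map_smul, Pi.smul_apply, smul_eq_mul, ← integral_const_mul]
      congr 1 with x
      ring)

@[simp]
theorem weightedTraceForm_apply (T : V →ₗ[ℝ] X → ℝ) (hT : ∀ v, MemLp (T v) 2 μ)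
    {γ : X → ℝ} (hγ : MemLp γ ⊤ μ) (v w : V) :
    weightedTraceForm μ T hT hγ v w = ∫ x, γ x * T v x * T w x ∂μ :=
  rfl

theorem isPosSemidef_weightedTraceForm (T : V →ₗ[ℝ] X → ℝ) (hT : ∀ v, MemLp (T v) 2 μ)
    {γ : X → ℝ} (hγ : MemLp γ ⊤ μ) (hγ_nonneg : ∀ᵐ x ∂μ, 0 ≤ γ x) :
    (weightedTraceForm μ T hT hγ).IsPosSemidef where
  isSymm := ⟨fun v w => by simp only [weightedTraceForm_apply, mul_right_comm]⟩
  isNonneg := ⟨fun v => integral_nonneg_of_ae <| by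
    filter_upwards [hγ_nonneg] with x hx
    simpa only [Pi.zero_apply, mul_assoc] using mul_nonneg hx (mul_self_nonneg (T v x))⟩

theorem weightedTraceForm_apply_self_mono (T : V →ₗ[ℝ] X → ℝ) (hT : ∀ v, MemLp (T v) 2 μ)
    {γ₁ γ₂ : X → ℝ} (hγ₁ : MemLp γ₁ ⊤ μ) (hγ₂ : MemLp γ₂ ⊤ μ) (hγ₁₂ : ∀ᵐ x ∂μ, γ₁ x ≤ γ₂ x)
    (v : V) : weightedTraceForm μ T hT hγ₁ v v ≤ weightedTraceForm μ T hT hγ₂ v v := by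
  refine integral_mono_ae (integrable_mul_mul_of_memLp_top hγ₁ (hT v) (hT v))
    (integrable_mul_mul_of_memLp_top hγ₂ (hT v) (hT v)) ?_
  filter_upwards [hγ₁₂] with x hx
  simpa only [mul_assoc] using mul_le_mul_of_nonneg_right hx (mul_self_nonneg (T v x))

end WeightedTraceForm

/-- Monotonicity of the Neumann-to-Dirichlet map (Corollary 4.2):
if `0 ≤ γ₁ ≤ γ₂` μ-a.e., then `ℓ(u₂) ≤ ℓ(u₁)`. -/
theorem nd_map_monotone
    {V : Type*} [AddCommGroup V] [Module ℝ V]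
    {X : Type*} [MeasurableSpace X] {μ : Measure X}
    (a : V → V → ℝ)
    (ha_symm : ∀ v w, a v w = a w v)
    (ha_add : ∀ u v w, a (u + v) w = a u w + a v w)
    (ha_smul : ∀ (c : ℝ) (v w : V), a (c • v) w = c * a v w)
    (ha_nonneg : ∀ v, 0 ≤ a v v)
    (T : V →ₗ[ℝ] (X → ℝ))
    (hT : ∀ v, MemLp (T v) 2 μ)
    (γ₁ γ₂ : X → ℝ)
    (hγ₁m : Measurable γ₁) (hγ₂m : Measurable γ₂)
    (hγ₁b : ∃ C, ∀ x, |γ₁ x| ≤ C) (hγ₂b : ∃ C, ∀ x, |γ₂ x| ≤ C)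
    (hγ₁0 : ∀ᵐ x ∂μ, 0 ≤ γ₁ x)
    (hγ₁₂ : ∀ᵐ x ∂μ, γ₁ x ≤ γ₂ x)
    (ℓ : V →ₗ[ℝ] ℝ)
    (u₁ u₂ : V)
    (hu₁ : ∀ w, a u₁ w + ∫ x, γ₁ x * T u₁ x * T w x ∂μ = ℓ w)
    (hu₂ : ∀ w, a u₂ w + ∫ x, γ₂ x * T u₂ x * T w x ∂μ = ℓ w) :
    ℓ u₂ ≤ ℓ u₁ := by
  obtain ⟨C₁, hC₁⟩ := hγ₁b
  obtain ⟨C₂, hC₂⟩ := hγ₂b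
  have hγ₁ : MemLp γ₁ ⊤ μ := memLp_top_of_bound hγ₁m.aestronglyMeasurable C₁ (ae_of_all _ hC₁)
  have hγ₂ : MemLp γ₂ ⊤ μ := memLp_top_of_bound hγ₂m.aestronglyMeasurable C₂ (ae_of_all _ hC₂)
  set B := symmBilinForm a ha_symm ha_add ha_smul + weightedTraceForm μ T hT hγ₁
  have hB : B.IsPosSemidef := (isPosSemidef_symmBilinForm a _ _ _ ha_nonneg).add
    (isPosSemidef_weightedTraceForm T hT hγ₁ hγ₁0)
  have hBu₁ : B u₁ = ℓ := LinearMap.ext hu₁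
  have hBu₂ : B u₂ u₂ ≤ ℓ u₂ := by
    rw [← hu₂ u₂]
    exact add_le_add le_rfl (weightedTraceForm_apply_self_mono T hT hγ₁ hγ₂ hγ₁₂ u₂)
  exact hB.apply_le_of_eq hBu₁ hBu₂
end

section
/- Under the abstract variational framework, let 0 < α ≤ β be constants, let Γ_m ⊆ X be a measurable set, and let γ, γ̃ : X → ℝ be bounded measurable functions with γ ≥ 0 and γ̃ ≥ 0 μ-a.e., satisfying α/4 ≤ γ̃ − γ ≤ α/2 μ-a.e. on Γ_m and α/2 − β ≤ γ̃ − γ ≤ −α/2 μ-a.e. on X∖Γ_m. Let ℓ : V → ℝ be a linear functional and let u, ũ ∈ V be weak solutions for (γ, ℓ) and (γ̃, ℓ) respectively. Then ∫_{Γ_m} (Tu)² dμ − ∫_{X∖Γ_m} (Tu)² dμ ≥ (1/2)∫_{Γ_m} (Tũ)² dμ − (2β/α − 1)∫_{X∖Γ_m} (Tũ)² dμ. (This is the chain of estimates in step (b) of the proof of Theorem 5.2, with γ̃ playing the role of γ^{(km)} and u_{km} = ũ.) -/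
/-!
Write `δ = γ' - γ`. The weak formulations say that `u` and `u'` have the same image under the
energy forms `a + ∫ γ T·T·` and `a + ∫ γ' T·T·`. Testing both with `u - u'` and using that both
forms are positive semidefinite gives the monotonicity relation `∫ δ (Tu')² ≤ ∫ δ (Tu)²`.
Bounding `δ` from above for `u` and from below for `u'` separately on `Γ_m` and on its
complement turns this into `(α/4) ∫_{Γ_m} (Tu')² + (α/2 - β) ∫_{Γ_mᶜ} (Tu')² ≤
(α/2) (∫_{Γ_m} (Tu)² - ∫_{Γ_mᶜ} (Tu)²)`, and dividing by `α/2` gives the estimate.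
-/

open MeasureTheory

section Monotonicity

variable {V : Type*} [AddCommGroup V]

theorem apply_self_le_apply_self_of_eq_add {B D : V → V → ℝ}
    (hB_add : ∀ v v' w, B (v + v') w = B v w + B v' w)
    (hD_add : ∀ v v' w, D (v + v') w = D v w + D v' w) (hD_symm : ∀ v w, D v w = D w v)
    (hB : ∀ v, 0 ≤ B v v) (hBD : ∀ v, 0 ≤ B v v + D v v) {u u' : V}
    (h : ∀ w, B u w = B u' w + D u' w) : D u' u' ≤ D u u := by
  have hB_sub (w : V) : B (u - u') w = D u' w := by
    rw [← add_sub_cancel_left (B u' w) (D u' w), ← h, eq_sub_iff_add_eq, ← hB_add, sub_add_cancel]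
  have hD_sub (w : V) : D (u - u') w = D u w - D u' w := by
    rw [eq_sub_iff_add_eq, ← hD_add, sub_add_cancel]
  have h₁ : 0 ≤ D u' (u - u') := hB_sub (u - u') ▸ hB (u - u')
  have h₂ : 0 ≤ D u (u - u') := by
    have := hBD (u - u')
    rwa [hB_sub, hD_sub, add_sub_cancel] at this
  rw [hD_symm, hD_sub] at h₁ h₂
  linarith [hD_symm u u']

end Monotonicity

section WeightedForm

variable {V X : Type*} [AddCommGroup V] [Module ℝ V] [MeasurableSpace X] {μ : Measure X}

theorem MeasureTheory.MemLp.integrable_bdd_mul_mul {γ f g : X → ℝ} {C : ℝ}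
    (hγ : AEStronglyMeasurable γ μ) (hγC : ∀ᵐ x ∂μ, |γ x| ≤ C) (hf : MemLp f 2 μ)
    (hg : MemLp g 2 μ) :
    Integrable (fun x => γ x * f x * g x) μ := by
  simpa only [Pi.mul_apply, mul_assoc] using (hf.integrable_mul hg).bdd_mul hγ hγC

variable (μ) in
noncomputable def weightedForm (T : V →ₗ[ℝ] X → ℝ) (γ : X → ℝ) (v w : V) : ℝ :=
  ∫ x, γ x * T v x * T w x ∂μ

variable {T : V →ₗ[ℝ] X → ℝ}

theorem weightedForm_comm (γ : X → ℝ) (v w : V) :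
    weightedForm μ T γ v w = weightedForm μ T γ w v := by
  simp only [weightedForm, mul_right_comm]

theorem weightedForm_add_left {γ : X → ℝ} {v v' w : V}
    (hv : Integrable (fun x => γ x * T v x * T w x) μ)
    (hv' : Integrable (fun x => γ x * T v' x * T w x) μ) :
    weightedForm μ T γ (v + v') w = weightedForm μ T γ v w + weightedForm μ T γ v' w := by
  rw [weightedForm, weightedForm, weightedForm, ← integral_add hv hv']
  simp only [map_add, Pi.add_apply, mul_add, add_mul]

theorem weightedForm_sub_weight {ρ γ : X → ℝ} {v w : V}
    (hρ : Integrable (fun x => ρ x * T v x * T w x) μ)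
    (hγ : Integrable (fun x => γ x * T v x * T w x) μ) :
    weightedForm μ T (ρ - γ) v w = weightedForm μ T ρ v w - weightedForm μ T γ v w := by
  rw [weightedForm, weightedForm, weightedForm, ← integral_sub hρ hγ]
  simp only [Pi.sub_apply, sub_mul]

theorem weightedForm_self_nonneg {γ : X → ℝ} (hγ : ∀ᵐ x ∂μ, 0 ≤ γ x) (v : V) :
    0 ≤ weightedForm μ T γ v v :=
  integral_nonneg_of_ae <| hγ.mono fun x hx => by
    simpa only [Pi.zero_apply, mul_assoc] using mul_nonneg hx (mul_self_nonneg (T v x))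

theorem weightedForm_self (γ : X → ℝ) (v : V) :
    weightedForm μ T γ v v = ∫ x, γ x * T v x ^ 2 ∂μ := by
  simp only [weightedForm, mul_assoc, sq]

theorem weightedForm_sub_weight_le_of_weak_solutions {a : V → V → ℝ}
    (ha_add : ∀ u v w, a (u + v) w = a u w + a v w) (ha_nonneg : ∀ v, 0 ≤ a v v)
    {γ γ' : X → ℝ} (hγ_int : ∀ v w, Integrable (fun x => γ x * T v x * T w x) μ)
    (hγ'_int : ∀ v w, Integrable (fun x => γ' x * T v x * T w x) μ)
    (hγ0 : ∀ᵐ x ∂μ, 0 ≤ γ x) (hγ'0 : ∀ᵐ x ∂μ, 0 ≤ γ' x) {ℓ : V → ℝ} {u u' : V}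
    (hu : ∀ w, a u w + weightedForm μ T γ u w = ℓ w)
    (hu' : ∀ w, a u' w + weightedForm μ T γ' u' w = ℓ w) :
    weightedForm μ T (γ' - γ) u' u' ≤ weightedForm μ T (γ' - γ) u u := by
  have hδ_int (v w : V) : Integrable (fun x => (γ' - γ) x * T v x * T w x) μ := by
    simpa only [Pi.sub_apply, sub_mul] using (hγ'_int v w).sub' (hγ_int v w)
  refine apply_self_le_apply_self_of_eq_add (B := fun v w => a v w + weightedForm μ T γ v w)
    (fun v v' w => ?add) (fun v v' w => weightedForm_add_left (hδ_int v w) (hδ_int v' w))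
    (weightedForm_comm _) (fun v => add_nonneg (ha_nonneg v) (weightedForm_self_nonneg hγ0 v))
    (fun v => ?pos) (fun w => ?eq)
  case add =>
    rw [ha_add, weightedForm_add_left (hγ_int v w) (hγ_int v' w)]; ring
  case pos =>
    rw [weightedForm_sub_weight (hγ'_int v v) (hγ_int v v)]
    linarith [ha_nonneg v, weightedForm_self_nonneg (T := T) hγ'0 v]
  case eq =>
    rw [weightedForm_sub_weight (hγ'_int u' w) (hγ_int u' w)]
    linarith [hu w, hu' w]

end WeightedForm

section PiecewiseBounds

variable {X : Type*} [MeasurableSpace X] {μ : Measure X} {s : Set X} {δ f : X → ℝ} {c d : ℝ}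

theorem integral_mul_sq_le (hs : MeasurableSet s) (hδf : Integrable (fun x => δ x * f x ^ 2) μ)
    (hf : Integrable (fun x => f x ^ 2) μ) (hin : ∀ᵐ x ∂μ, x ∈ s → δ x ≤ c)
    (hout : ∀ᵐ x ∂μ, x ∉ s → δ x ≤ d) :
    ∫ x, δ x * f x ^ 2 ∂μ ≤ c * ∫ x in s, f x ^ 2 ∂μ + d * ∫ x in sᶜ, f x ^ 2 ∂μ := by
  rw [← integral_add_compl hs hδf, ← integral_const_mul, ← integral_const_mul]
  refine add_le_add (setIntegral_mono_on_ae hδf.integrableOn (hf.const_mul c).integrableOn hs ?_)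
    (setIntegral_mono_on_ae hδf.integrableOn (hf.const_mul d).integrableOn hs.compl ?_)
  · exact hin.mono fun x hx hxs => mul_le_mul_of_nonneg_right (hx hxs) (sq_nonneg _)
  · exact hout.mono fun x hx hxs => mul_le_mul_of_nonneg_right (hx hxs) (sq_nonneg _)

theorem le_integral_mul_sq (hs : MeasurableSet s) (hδf : Integrable (fun x => δ x * f x ^ 2) μ)
    (hf : Integrable (fun x => f x ^ 2) μ) (hin : ∀ᵐ x ∂μ, x ∈ s → c ≤ δ x)
    (hout : ∀ᵐ x ∂μ, x ∉ s → d ≤ δ x) :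
    c * ∫ x in s, f x ^ 2 ∂μ + d * ∫ x in sᶜ, f x ^ 2 ∂μ ≤ ∫ x, δ x * f x ^ 2 ∂μ := by
  rw [← integral_add_compl hs hδf, ← integral_const_mul, ← integral_const_mul]
  refine add_le_add (setIntegral_mono_on_ae (hf.const_mul c).integrableOn hδf.integrableOn hs ?_)
    (setIntegral_mono_on_ae (hf.const_mul d).integrableOn hδf.integrableOn hs.compl ?_)
  · exact hin.mono fun x hx hxs => mul_le_mul_of_nonneg_right (hx hxs) (sq_nonneg _)
  · exact hout.mono fun x hx hxs => mul_le_mul_of_nonneg_right (hx hxs) (sq_nonneg _)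

end PiecewiseBounds

theorem quantitative_localized_estimate_general
    {V : Type*} [AddCommGroup V] [Module ℝ V]
    {X : Type*} [MeasurableSpace X] {μ : Measure X}
    (a : V → V → ℝ)
    (ha_add : ∀ u v w, a (u + v) w = a u w + a v w)
    (ha_nonneg : ∀ v, 0 ≤ a v v)
    (T : V →ₗ[ℝ] (X → ℝ))
    (hT : ∀ v, MemLp (T v) 2 μ)
    (α β : ℝ) (hα : 0 < α)
    (Γm : Set X) (hΓm : MeasurableSet Γm)
    (γ γ' : X → ℝ)
    (hγm : Measurable γ) (hγ'm : Measurable γ')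
    (hγb : ∃ C, ∀ x, |γ x| ≤ C) (hγ'b : ∃ C, ∀ x, |γ' x| ≤ C)
    (hγ0 : ∀ᵐ x ∂μ, 0 ≤ γ x)
    (hγ'0 : ∀ᵐ x ∂μ, 0 ≤ γ' x)
    (hin : ∀ᵐ x ∂μ, x ∈ Γm → α / 4 ≤ γ' x - γ x ∧ γ' x - γ x ≤ α / 2)
    (hout : ∀ᵐ x ∂μ, x ∉ Γm → α / 2 - β ≤ γ' x - γ x ∧ γ' x - γ x ≤ -(α / 2))
    (ℓ : V →ₗ[ℝ] ℝ)
    (u u' : V)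
    (hu : ∀ w, a u w + ∫ x, γ x * T u x * T w x ∂μ = ℓ w)
    (hu' : ∀ w, a u' w + ∫ x, γ' x * T u' x * T w x ∂μ = ℓ w) :
    (∫ x in Γm, (T u x) ^ 2 ∂μ) - ∫ x in Γmᶜ, (T u x) ^ 2 ∂μ ≥
      (1 / 2) * (∫ x in Γm, (T u' x) ^ 2 ∂μ) -
        (2 * β / α - 1) * ∫ x in Γmᶜ, (T u' x) ^ 2 ∂μ := by
  obtain ⟨C, hC⟩ := hγb
  obtain ⟨C', hC'⟩ := hγ'b
  have hint {ρ : X → ℝ} {K : ℝ} (hρ : Measurable ρ) (hK : ∀ x, |ρ x| ≤ K) (v w : V) :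
      Integrable (fun x => ρ x * T v x * T w x) μ :=
    (hT v).integrable_bdd_mul_mul hρ.aestronglyMeasurable (ae_of_all _ hK) (hT w)
  have hmono := weightedForm_sub_weight_le_of_weak_solutions ha_add ha_nonneg
    (hint hγm hC) (hint hγ'm hC') hγ0 hγ'0 hu hu'
  rw [weightedForm_self, weightedForm_self] at hmono
  have hδ_sq (v : V) : Integrable (fun x => (γ' - γ) x * T v x ^ 2) μ := by
    simpa only [mul_assoc, sq] using hint (hγ'm.sub hγm)
      (fun x => (abs_sub _ _).trans (add_le_add (hC' x) (hC x))) v v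
  have hupper := integral_mul_sq_le hΓm (hδ_sq u) (hT u).integrable_sq
    (hin.mono fun x h hx => (h hx).2) (hout.mono fun x h hx => (h hx).2)
  have hlower := le_integral_mul_sq hΓm (hδ_sq u') (hT u').integrable_sq
    (hin.mono fun x h hx => (h hx).1) (hout.mono fun x h hx => (h hx).1)
  have hk : (2 * β / α - 1) * (α / 2) = β - α / 2 := by field_simp
  refine le_of_mul_le_mul_left ?_ (half_pos hα)
  linear_combination hlower.trans (hmono.trans hupper) - (∫ x in Γmᶜ, T u' x ^ 2 ∂μ) * hk

/-- Chain of estimates from step (b) of the proof of Theorem 5.2: if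
`α/4 ≤ γ' − γ ≤ α/2` a.e. on `Γ_m` and `α/2 − β ≤ γ' − γ ≤ −α/2` a.e. on `X∖Γ_m`,
then `∫_{Γ_m} (Tu)² − ∫_{X∖Γ_m} (Tu)² ≥ (1/2)∫_{Γ_m} (Tu')² − (2β/α − 1)∫_{X∖Γ_m} (Tu')²`. -/
theorem quantitative_localized_estimate
    {V : Type*} [AddCommGroup V] [Module ℝ V]
    {X : Type*} [MeasurableSpace X] {μ : Measure X}
    (a : V → V → ℝ)
    (ha_symm : ∀ v w, a v w = a w v)
    (ha_add : ∀ u v w, a (u + v) w = a u w + a v w)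
    (ha_smul : ∀ (c : ℝ) (v w : V), a (c • v) w = c * a v w)
    (ha_nonneg : ∀ v, 0 ≤ a v v)
    (T : V →ₗ[ℝ] (X → ℝ))
    (hT : ∀ v, MemLp (T v) 2 μ)
    (α β : ℝ) (hα : 0 < α) (hαβ : α ≤ β)
    (Γm : Set X) (hΓm : MeasurableSet Γm)
    (γ γ' : X → ℝ)
    (hγm : Measurable γ) (hγ'm : Measurable γ')
    (hγb : ∃ C, ∀ x, |γ x| ≤ C) (hγ'b : ∃ C, ∀ x, |γ' x| ≤ C)
    (hγ0 : ∀ᵐ x ∂μ, 0 ≤ γ x)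
    (hγ'0 : ∀ᵐ x ∂μ, 0 ≤ γ' x)
    (hin : ∀ᵐ x ∂μ, x ∈ Γm → α / 4 ≤ γ' x - γ x ∧ γ' x - γ x ≤ α / 2)
    (hout : ∀ᵐ x ∂μ, x ∉ Γm → α / 2 - β ≤ γ' x - γ x ∧ γ' x - γ x ≤ -(α / 2))
    (ℓ : V →ₗ[ℝ] ℝ)
    (u u' : V)
    (hu : ∀ w, a u w + ∫ x, γ x * T u x * T w x ∂μ = ℓ w)
    (hu' : ∀ w, a u' w + ∫ x, γ' x * T u' x * T w x ∂μ = ℓ w) :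
    (∫ x in Γm, (T u x) ^ 2 ∂μ) - ∫ x in Γmᶜ, (T u x) ^ 2 ∂μ ≥
      (1 / 2) * (∫ x in Γm, (T u' x) ^ 2 ∂μ) -
        (2 * β / α - 1) * ∫ x in Γmᶜ, (T u' x) ^ 2 ∂μ :=
  quantitative_localized_estimate_general a ha_add ha_nonneg T hT α β hα Γm hΓm γ γ' hγm hγ'm hγb
    hγ'b hγ0 hγ'0 hin hout ℓ u u' hu hu'
end
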